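/- arXiv:2004.01293 — 5 statements merged into one kernel-verified Lean document; each statement's English description precedes it below -/
import Mathlib

section
/- Let G be a weighted directed bipartite graph with source vertices S and destination vertices D, and let M_coll denote the (functional or structural) motif adjacency matrix of the collider motif M_coll in G. Then for all vertices i,j: (M_coll)_{ij} = 1{i ≠ j} · Σ_{k ∈ D with (i,k) ∈ E and (j,k) ∈ E} (1/2)·[W((i,k)) + W((j,k))]. -/
open scoped Classical BigOperators Matrix

noncomputable section

/-- A motif on `m` vertices: a weakly connected loopless directed graph on the vertex set
`Fin m`, given by its edge set. -/
structure Motif (m : ℕ) where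
  edges : Finset (Fin m × Fin m)
  irrefl : ∀ e ∈ edges, e.1 ≠ e.2
  connected : (SimpleGraph.fromRel (fun u v => (u, v) ∈ edges)).Connected

variable {n m : ℕ}

/-- Edge set of the weighted directed graph with weight matrix `G`:
`E = {(i,j) : i ≠ j and G i j > 0}`. -/
def edgeFinset (G : Matrix (Fin n) (Fin n) ℝ) : Finset (Fin n × Fin n) :=
  Finset.univ.filter fun p => p.1 ≠ p.2 ∧ 0 < G p.1 p.2

/-- Directed-edge indicator matrix `J`. -/
def Jmat (G : Matrix (Fin n) (Fin n) ℝ) : Matrix (Fin n) (Fin n) ℝ :=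
  fun i j => if (i, j) ∈ edgeFinset G then 1 else 0

/-- Single-edge indicator matrix `J_s`. -/
def Jsmat (G : Matrix (Fin n) (Fin n) ℝ) : Matrix (Fin n) (Fin n) ℝ :=
  fun i j => if (i, j) ∈ edgeFinset G ∧ (j, i) ∉ edgeFinset G then 1 else 0

/-- Double-edge indicator matrix `J_d`. -/
def Jdmat (G : Matrix (Fin n) (Fin n) ℝ) : Matrix (Fin n) (Fin n) ℝ :=
  fun i j => if (i, j) ∈ edgeFinset G ∧ (j, i) ∈ edgeFinset G then 1 else 0

/-- Missing-edge indicator matrix `J_0`. -/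
def J0mat (G : Matrix (Fin n) (Fin n) ℝ) : Matrix (Fin n) (Fin n) ℝ :=
  fun i j => if (i, j) ∉ edgeFinset G ∧ (j, i) ∉ edgeFinset G ∧ i ≠ j then 1 else 0

/-- Vertex-distinct indicator matrix `J_n`. -/
def Jnmat (n : ℕ) : Matrix (Fin n) (Fin n) ℝ :=
  fun i j => if i ≠ j then 1 else 0

/-- Single-edge weighted matrix `G_s`. -/
def Gsmat (G : Matrix (Fin n) (Fin n) ℝ) : Matrix (Fin n) (Fin n) ℝ :=
  fun i j => if (i, j) ∈ edgeFinset G ∧ (j, i) ∉ edgeFinset G then G i j else 0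

/-- Double-edge weighted matrix `G_d`. -/
def Gdmat (G : Matrix (Fin n) (Fin n) ℝ) : Matrix (Fin n) (Fin n) ℝ :=
  fun i j => if (i, j) ∈ edgeFinset G ∧ (j, i) ∈ edgeFinset G then G i j + G j i else 0

/-- Entrywise (Hadamard) product of matrices. -/
def had (A B : Matrix (Fin n) (Fin n) ℝ) : Matrix (Fin n) (Fin n) ℝ :=
  fun i j => A i j * B i j

/-- Well-formedness of a candidate subgraph `H = (V_H, E_H)` of a graph on `Fin n`:
each edge joins two distinct vertices of `H`. -/
def IsGraphPair (H : Finset (Fin n) × Finset (Fin n × Fin n)) : Prop :=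
  ∀ e ∈ H.2, e.1 ∈ H.1 ∧ e.2 ∈ H.1 ∧ e.1 ≠ e.2

/-- `φ` is an isomorphism from the motif `M` onto the graph `H = (V_H, E_H)`. -/
def IsIso (M : Motif m) (H : Finset (Fin n) × Finset (Fin n × Fin n))
    (φ : Fin m → Fin n) : Prop :=
  Function.Injective φ ∧ Finset.image φ Finset.univ = H.1 ∧
    ∀ u v : Fin m, (u, v) ∈ M.edges ↔ (φ u, φ v) ∈ H.2

/-- `H` is a functional instance of motif `M` in the graph with weight matrix `G`,
i.e. `M ≅ H ≤ G`. -/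
def IsFuncInstance (M : Motif m) (G : Matrix (Fin n) (Fin n) ℝ)
    (H : Finset (Fin n) × Finset (Fin n × Fin n)) : Prop :=
  IsGraphPair H ∧ H.2 ⊆ edgeFinset G ∧ ∃ φ, IsIso M H φ

/-- `H` is a structural instance of motif `M` in the graph with weight matrix `G`,
i.e. `M ≅ H < G` (`H` an induced subgraph: `E_H = E ∩ (V_H × V_H)`). -/
def IsStrucInstance (M : Motif m) (G : Matrix (Fin n) (Fin n) ℝ)
    (H : Finset (Fin n) × Finset (Fin n × Fin n)) : Prop :=
  IsGraphPair H ∧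
    H.2 = (edgeFinset G).filter (fun e => e.1 ∈ H.1 ∧ e.2 ∈ H.1) ∧
    ∃ φ, IsIso M H φ

/-- `{i, j}` is an anchored pair of the instance `H`: there is an isomorphism `φ` from
`M` to `H` and distinct anchors `a, b ∈ A` with `φ a = i` and `φ b = j`. -/
def AnchoredPair (M : Motif m) (A : Finset (Fin m))
    (H : Finset (Fin n) × Finset (Fin n × Fin n)) (i j : Fin n) : Prop :=
  ∃ φ, IsIso M H φ ∧ ∃ a ∈ A, ∃ b ∈ A, a ≠ b ∧ φ a = i ∧ φ b = j

/-- The functional motif adjacency matrix of the motif `(M, A)` in the graph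
with weight matrix `G`. -/
def mamFunc (M : Motif m) (A : Finset (Fin m)) (G : Matrix (Fin n) (Fin n) ℝ) :
    Matrix (Fin n) (Fin n) ℝ :=
  fun i j => (1 / (M.edges.card : ℝ)) *
    ∑ H : Finset (Fin n) × Finset (Fin n × Fin n),
      if IsFuncInstance M G H ∧ AnchoredPair M A H i j then ∑ e ∈ H.2, G e.1 e.2 else 0

/-- The structural motif adjacency matrix of the motif `(M, A)` in the graph
with weight matrix `G`. -/
def mamStruc (M : Motif m) (A : Finset (Fin m)) (G : Matrix (Fin n) (Fin n) ℝ) :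
    Matrix (Fin n) (Fin n) ℝ :=
  fun i j => (1 / (M.edges.card : ℝ)) *
    ∑ H : Finset (Fin n) × Finset (Fin n × Fin n),
      if IsStrucInstance M G H ∧ AnchoredPair M A H i j then ∑ e ∈ H.2, G e.1 e.2 else 0

/-!
An instance of the collider anchored at `i ≠ j` is determined by its middle vertex `k`, a
common out-neighbour of `i` and `j`, and it carries the weight `W(i,k) + W(j,k)`. In a bipartite
graph `i, j ∈ S` and `k ∈ D`, so `{i, j, k}` spans no other edge: functional and structural
instances coincide.
-/

open Finset

lemma ne_of_mem_edgeFinset {G : Matrix (Fin n) (Fin n) ℝ} {p : Fin n × Fin n}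
    (hp : p ∈ edgeFinset G) : p.1 ≠ p.2 :=
  (mem_filter.1 hp).2.1

lemma IsStrucInstance.isFuncInstance {M : Motif m} {G : Matrix (Fin n) (Fin n) ℝ}
    {H : Finset (Fin n) × Finset (Fin n × Fin n)} (h : IsStrucInstance M G H) :
    IsFuncInstance M G H :=
  ⟨h.1, h.2.1 ▸ filter_subset _ _, h.2.2⟩

def colliderGraph (i j k : Fin n) : Finset (Fin n) × Finset (Fin n × Fin n) :=
  ({i, j, k}, {(i, k), (j, k)})

lemma colliderGraph_comm (i j k : Fin n) : colliderGraph i j k = colliderGraph j i k := by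
  simp only [colliderGraph, insert_comm i j, pair_comm (i, k)]

lemma colliderGraph_injective (i j : Fin n) : Function.Injective (colliderGraph i j) := by
  intro k₁ k₂ h
  have hmem : (i, k₁) ∈ (colliderGraph i j k₂).2 := h ▸ by simp [colliderGraph]
  simp only [colliderGraph, mem_insert, mem_singleton, Prod.mk.injEq] at hmem
  rcases hmem with ⟨-, hk⟩ | ⟨-, hk⟩ <;> exact hk

lemma isGraphPair_colliderGraph {i j k : Fin n} (hik : i ≠ k) (hjk : j ≠ k) :
    IsGraphPair (colliderGraph i j k) := by
  intro e he
  simp only [colliderGraph, mem_insert, mem_singleton] at he ⊢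
  rcases he with rfl | rfl <;> simp [hik, hjk]

section Collider

variable {M : Motif 3} {G : Matrix (Fin n) (Fin n) ℝ} {i j : Fin n}

lemma eq_colliderGraph_of_isIso (hM : M.edges = {(0, 1), (2, 1)})
    {H : Finset (Fin n) × Finset (Fin n × Fin n)} (hH : IsGraphPair H) {φ : Fin 3 → Fin n}
    (hφ : IsIso M H φ) : H = colliderGraph (φ 0) (φ 2) (φ 1) := by
  obtain ⟨-, himg, hedge⟩ := hφ
  refine Prod.ext ?_ ?_
  · rw [← himg]
    ext x
    simp only [mem_image, mem_univ, true_and, Fin.exists_fin_succ, Fin.succ_zero_eq_one,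
      Fin.succ_one_eq_two, IsEmpty.exists_iff, or_false, colliderGraph, mem_insert, mem_singleton]
    tauto
  · ext ⟨u, v⟩
    constructor
    · intro he
      obtain ⟨hu, hv, -⟩ := hH _ he
      rw [← himg] at hu hv
      obtain ⟨a, -, rfl⟩ := mem_image.1 hu
      obtain ⟨b, -, rfl⟩ := mem_image.1 hv
      have hab := (hedge a b).2 he
      rw [hM] at hab
      simp only [mem_insert, mem_singleton, Prod.mk.injEq] at hab
      rcases hab with ⟨rfl, rfl⟩ | ⟨rfl, rfl⟩ <;> simp [colliderGraph]
    · intro he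
      simp only [colliderGraph, mem_insert, mem_singleton, Prod.mk.injEq] at he
      rcases he with ⟨rfl, rfl⟩ | ⟨rfl, rfl⟩
      · exact (hedge 0 1).1 (by simp [hM])
      · exact (hedge 2 1).1 (by simp [hM])

lemma isIso_colliderGraph (hM : M.edges = {(0, 1), (2, 1)}) {k : Fin n}
    (hij : i ≠ j) (hik : i ≠ k) (hjk : j ≠ k) :
    IsIso M (colliderGraph i j k) ![i, k, j] := by
  refine ⟨?_, ?_, ?_⟩
  · intro a b hab
    fin_cases a <;> fin_cases b <;> simp_all [eq_comm]
  · ext x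
    simp only [mem_image, mem_univ, true_and, Fin.exists_fin_succ, Matrix.cons_val_zero,
      Matrix.cons_val_succ, Matrix.cons_val_fin_one, exists_const, colliderGraph, mem_insert,
      mem_singleton]
    tauto
  · intro a b
    rw [hM]
    fin_cases a <;> fin_cases b <;>
      simp [colliderGraph, hij, hik, hjk, hij.symm, hik.symm, hjk.symm]

lemma anchoredPair_collider_iff (hM : M.edges = {(0, 1), (2, 1)})
    {H : Finset (Fin n) × Finset (Fin n × Fin n)} (hH : IsGraphPair H) :
    AnchoredPair M {0, 2} H i j ↔ ∃ k, i ≠ j ∧ i ≠ k ∧ j ≠ k ∧ H = colliderGraph i j k := by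
  constructor
  · rintro ⟨φ, hφ, a, ha, b, hb, hab, rfl, rfl⟩
    have hne : ∀ {x y : Fin 3}, x ≠ y → φ x ≠ φ y := fun h => hφ.1.ne h
    rw [eq_colliderGraph_of_isIso hM hH hφ]
    simp only [mem_insert, mem_singleton] at ha hb
    rcases ha with rfl | rfl <;> rcases hb with rfl | rfl <;> simp only [ne_eq, not_true] at hab
    · exact ⟨φ 1, hne (by decide), hne (by decide), hne (by decide), rfl⟩
    · exact ⟨φ 1, hne (by decide), hne (by decide), hne (by decide), colliderGraph_comm _ _ _⟩
  · rintro ⟨k, hij, hik, hjk, rfl⟩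
    exact ⟨_, isIso_colliderGraph hM hij hik hjk, 0, by simp, 2, by simp, by decide, rfl, rfl⟩

lemma isFuncInstance_and_anchoredPair_collider_iff (hM : M.edges = {(0, 1), (2, 1)})
    (H : Finset (Fin n) × Finset (Fin n × Fin n)) :
    IsFuncInstance M G H ∧ AnchoredPair M {0, 2} H i j ↔
      i ≠ j ∧ ∃ k, (i, k) ∈ edgeFinset G ∧ (j, k) ∈ edgeFinset G ∧ H = colliderGraph i j k := by
  constructor
  · rintro ⟨⟨hH, hsub, -⟩, hanch⟩
    obtain ⟨k, hij, -, -, rfl⟩ := (anchoredPair_collider_iff hM hH).1 hanch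
    exact ⟨hij, k, hsub (by simp [colliderGraph]), hsub (by simp [colliderGraph]), rfl⟩
  · rintro ⟨hij, k, hik, hjk, rfl⟩
    have hik' : i ≠ k := ne_of_mem_edgeFinset hik
    have hjk' : j ≠ k := ne_of_mem_edgeFinset hjk
    have hH := isGraphPair_colliderGraph hik' hjk'
    refine ⟨⟨hH, ?_, _, isIso_colliderGraph hM hij hik' hjk'⟩,
      (anchoredPair_collider_iff hM hH).2 ⟨k, hij, hik', hjk', rfl⟩⟩
    simp [colliderGraph, insert_subset_iff, hik, hjk]

lemma filter_edgeFinset_colliderGraph_of_bipartite {S D : Finset (Fin n)} (hdisj : Disjoint S D)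
    (hbip : ∀ p ∈ edgeFinset G, p.1 ∈ S ∧ p.2 ∈ D) {k : Fin n}
    (hik : (i, k) ∈ edgeFinset G) (hjk : (j, k) ∈ edgeFinset G) :
    (edgeFinset G).filter
        (fun e => e.1 ∈ (colliderGraph i j k).1 ∧ e.2 ∈ (colliderGraph i j k).1) =
      (colliderGraph i j k).2 := by
  ext ⟨u, v⟩
  simp only [mem_filter, colliderGraph, mem_insert, mem_singleton, Prod.mk.injEq]
  constructor
  · rintro ⟨he, hu, hv⟩
    -- edges run from `S` to `D`, and `i, j ∈ S`, `k ∈ D`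
    have hS : ∀ x ∈ S, x ∉ D := fun x hx => disjoint_left.1 hdisj hx
    obtain ⟨huS, hvD⟩ := hbip _ he
    obtain ⟨hiS, hkD⟩ := hbip _ hik
    obtain ⟨hjS, -⟩ := hbip _ hjk
    grind
  · rintro (⟨rfl, rfl⟩ | ⟨rfl, rfl⟩) <;> simp [hik, hjk]

lemma isStrucInstance_and_anchoredPair_collider_iff_of_bipartite
    (hM : M.edges = {(0, 1), (2, 1)}) {S D : Finset (Fin n)} (hdisj : Disjoint S D)
    (hbip : ∀ p ∈ edgeFinset G, p.1 ∈ S ∧ p.2 ∈ D) (H : Finset (Fin n) × Finset (Fin n × Fin n)) :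
    IsStrucInstance M G H ∧ AnchoredPair M {0, 2} H i j ↔
      i ≠ j ∧ ∃ k, (i, k) ∈ edgeFinset G ∧ (j, k) ∈ edgeFinset G ∧ H = colliderGraph i j k := by
  refine ⟨fun h => (isFuncInstance_and_anchoredPair_collider_iff hM H).1
    ⟨h.1.isFuncInstance, h.2⟩, fun h => ?_⟩
  obtain ⟨⟨hH, -, hiso⟩, hanch⟩ := (isFuncInstance_and_anchoredPair_collider_iff hM H).2 h
  obtain ⟨-, k, hik, hjk, rfl⟩ := h
  exact ⟨⟨hH, (filter_edgeFinset_colliderGraph_of_bipartite hdisj hbip hik hjk).symm, hiso⟩, hanch⟩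

end Collider

lemma sum_ite_colliderGraph (G : Matrix (Fin n) (Fin n) ℝ) (i j : Fin n) :
    (∑ H : Finset (Fin n) × Finset (Fin n × Fin n),
      if i ≠ j ∧ ∃ k, (i, k) ∈ edgeFinset G ∧ (j, k) ∈ edgeFinset G ∧ H = colliderGraph i j k
      then ∑ e ∈ H.2, G e.1 e.2 else 0) =
      (if i ≠ j then (1 : ℝ) else 0) *
        ∑ k ∈ univ.filter (fun k => (i, k) ∈ edgeFinset G ∧ (j, k) ∈ edgeFinset G),
          (G i k + G j k) := by
  by_cases hij : i = j
  · simp [hij]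
  have hinstances : univ.filter (fun H => i ≠ j ∧
      ∃ k, (i, k) ∈ edgeFinset G ∧ (j, k) ∈ edgeFinset G ∧ H = colliderGraph i j k) =
      (univ.filter fun k => (i, k) ∈ edgeFinset G ∧ (j, k) ∈ edgeFinset G).image
        (colliderGraph i j) := by
    ext H
    simp [hij, eq_comm, and_assoc]
  rw [if_pos hij, one_mul, ← sum_filter, hinstances,
    sum_image (colliderGraph_injective i j).injOn]
  exact sum_congr rfl fun k _ => sum_pair (by simpa using hij)

lemma mamFunc_collider {M : Motif 3} (hM : M.edges = {(0, 1), (2, 1)})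
    (G : Matrix (Fin n) (Fin n) ℝ) (i j : Fin n) :
    mamFunc M {0, 2} G i j =
      (if i ≠ j then (1 : ℝ) else 0) *
        ∑ k ∈ univ.filter (fun k => (i, k) ∈ edgeFinset G ∧ (j, k) ∈ edgeFinset G),
          (1 / 2) * (G i k + G j k) := by
  rw [mamFunc, hM, card_pair (by decide), Nat.cast_ofNat, sum_congr rfl fun H _ =>
    if_congr (isFuncInstance_and_anchoredPair_collider_iff hM H) rfl rfl,
    sum_ite_colliderGraph, mul_left_comm, mul_sum]

lemma mamStruc_collider_of_bipartite {M : Motif 3} (hM : M.edges = {(0, 1), (2, 1)})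
    {G : Matrix (Fin n) (Fin n) ℝ} {S D : Finset (Fin n)} (hdisj : Disjoint S D)
    (hbip : ∀ p ∈ edgeFinset G, p.1 ∈ S ∧ p.2 ∈ D) (i j : Fin n) :
    mamStruc M {0, 2} G i j =
      (if i ≠ j then (1 : ℝ) else 0) *
        ∑ k ∈ univ.filter (fun k => (i, k) ∈ edgeFinset G ∧ (j, k) ∈ edgeFinset G),
          (1 / 2) * (G i k + G j k) := by
  rw [mamStruc, hM, card_pair (by decide), Nat.cast_ofNat, sum_congr rfl fun H _ =>
    if_congr (isStrucInstance_and_anchoredPair_collider_iff_of_bipartite hM hdisj hbip H) rfl rfl,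
    sum_ite_colliderGraph, mul_left_comm, mul_sum]

theorem collider_mam_bipartite_general
    (G : Matrix (Fin n) (Fin n) ℝ)
    (S D : Finset (Fin n)) (hdisj : Disjoint S D)
    (hbip : ∀ p ∈ edgeFinset G, p.1 ∈ S ∧ p.2 ∈ D)
    (Mcoll : Motif 3) (hM : Mcoll.edges = {((0 : Fin 3), 1), (2, 1)})
    (A : Finset (Fin 3)) (hA : A = {0, 2}) (i j : Fin n) :
    mamFunc Mcoll A G i j =
      (if i ≠ j then (1 : ℝ) else 0) *
        ∑ k ∈ D.filter (fun k => (i, k) ∈ edgeFinset G ∧ (j, k) ∈ edgeFinset G),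
          (1 / 2) * (G i k + G j k) ∧
    mamStruc Mcoll A G i j =
      (if i ≠ j then (1 : ℝ) else 0) *
        ∑ k ∈ D.filter (fun k => (i, k) ∈ edgeFinset G ∧ (j, k) ∈ edgeFinset G),
          (1 / 2) * (G i k + G j k) := by
  have hcommon : D.filter (fun k => (i, k) ∈ edgeFinset G ∧ (j, k) ∈ edgeFinset G) =
      univ.filter (fun k => (i, k) ∈ edgeFinset G ∧ (j, k) ∈ edgeFinset G) := by
    ext k
    simpa using fun hik _ => (hbip _ hik).2
  rw [hcommon, hA]
  exact ⟨mamFunc_collider hM G i j, mamStruc_collider_of_bipartite hM hdisj hbip i j⟩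

/-- **Colliders in bipartite graphs.** -/
theorem collider_mam_bipartite
    (G : Matrix (Fin n) (Fin n) ℝ)
    (hpos : ∀ i j, 0 ≤ G i j) (hdiag : ∀ i, G i i = 0)
    (S D : Finset (Fin n)) (hdisj : Disjoint S D) (hcover : S ∪ D = Finset.univ)
    (hbip : ∀ p ∈ edgeFinset G, p.1 ∈ S ∧ p.2 ∈ D)
    (Mcoll : Motif 3) (hM : Mcoll.edges = {((0 : Fin 3), 1), (2, 1)})
    (A : Finset (Fin 3)) (hA : A = {0, 2}) (i j : Fin n) :
    mamFunc Mcoll A G i j =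
      (if i ≠ j then (1 : ℝ) else 0) *
        ∑ k ∈ D.filter (fun k => (i, k) ∈ edgeFinset G ∧ (j, k) ∈ edgeFinset G),
          (1 / 2) * (G i k + G j k) ∧
    mamStruc Mcoll A G i j =
      (if i ≠ j then (1 : ℝ) else 0) *
        ∑ k ∈ D.filter (fun k => (i, k) ∈ edgeFinset G ∧ (j, k) ∈ edgeFinset G),
          (1 / 2) * (G i k + G j k) :=
  collider_mam_bipartite_general G S D hdisj hbip Mcoll hM A hA i j
end
end

section
/- Let G be a weighted directed bipartite graph with source vertices S and destination vertices D, and let M_expa denote the (functional or structural) motif adjacency matrix of the expander motif M_expa in G. Then for all vertices i,j: (M_expa)_{ij} = 1{i ≠ j} · Σ_{k ∈ S with (k,i) ∈ E and (k,j) ∈ E} (1/2)·[W((k,i)) + W((k,j))]. -/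
open scoped Classical BigOperators Matrix

noncomputable section

variable {n m : ℕ}

/-! In the expander motif the centre `1` is the only vertex with out-edges and the anchors `0`, `2`
are its two leaves, so an instance anchored at `{i, j}` is exactly an out-star `k → i, k → j`, and it
is determined by its centre `k`. In a bipartite graph such a star is automatically induced: its leaves
lie in `D` and its centre in `S`, so no other edge joins its vertices. Hence functional and structural
instances coincide, each contributes `G k i + G k j`, and the factor `1 / |E_M| = 1 / 2` remains. -/

open Finset

def expanderGraph (k i j : Fin n) : Finset (Fin n) × Finset (Fin n × Fin n) :=
  ({k, i, j}, {(k, i), (k, j)})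

lemma expanderGraph_comm (k i j : Fin n) : expanderGraph k i j = expanderGraph k j i := by
  simp only [expanderGraph, pair_comm]

lemma expanderGraph_injective (i j : Fin n) : Function.Injective (expanderGraph · i j) := by
  intro k k' (h : expanderGraph k i j = expanderGraph k' i j)
  have hk : (k, i) ∈ (expanderGraph k' i j).2 := by
    rw [← h]
    simp [expanderGraph]
  simp only [expanderGraph, mem_insert, mem_singleton, Prod.ext_iff] at hk
  tauto

lemma mem_edgeFinset {G : Matrix (Fin n) (Fin n) ℝ} {p : Fin n × Fin n} :
    p ∈ edgeFinset G ↔ p.1 ≠ p.2 ∧ 0 < G p.1 p.2 := by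
  simp [edgeFinset]

lemma isGraphPair_expanderGraph {k i j : Fin n} (hki : k ≠ i) (hkj : k ≠ j) :
    IsGraphPair (expanderGraph k i j) := by
  intro e he
  simp only [expanderGraph, mem_insert, mem_singleton] at he
  rcases he with rfl | rfl <;> simp [expanderGraph, hki, hkj]

lemma AnchoredPair.ne {M : Motif m} {A : Finset (Fin m)}
    {H : Finset (Fin n) × Finset (Fin n × Fin n)} {i j : Fin n}
    (h : AnchoredPair M A H i j) : i ≠ j := by
  obtain ⟨φ, ⟨hinj, -, -⟩, a, -, b, -, hab, rfl, rfl⟩ := h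
  exact hinj.ne hab

section ExpanderMotif

variable {M : Motif 3} {G : Matrix (Fin n) (Fin n) ℝ} {H : Finset (Fin n) × Finset (Fin n × Fin n)}
  {i j k : Fin n}

lemma isIso_expanderGraph (hM : M.edges = {(1, 0), (1, 2)})
    (hki : k ≠ i) (hkj : k ≠ j) (hij : i ≠ j) :
    IsIso M (expanderGraph k i j) ![i, k, j] := by
  refine ⟨?_, ?_, ?_⟩
  · intro u v
    fin_cases u <;> fin_cases v <;> simp [hki, hkj, hij, hki.symm, hkj.symm, hij.symm]
  · ext x
    simp only [expanderGraph, mem_image, mem_univ, true_and, Fin.exists_fin_succ,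
      Matrix.cons_val_zero, Matrix.cons_val_succ, Matrix.cons_val_fin_one, exists_const,
      mem_insert, mem_singleton]
    tauto
  · intro u v
    rw [hM]
    fin_cases u <;> fin_cases v <;>
      simp [expanderGraph, hki, hkj, hij, hki.symm, hkj.symm, hij.symm]

lemma IsIso.eq_expanderGraph (hM : M.edges = {(1, 0), (1, 2)}) (hH : IsGraphPair H)
    {φ : Fin 3 → Fin n} (hφ : IsIso M H φ) : H = expanderGraph (φ 1) (φ 0) (φ 2) := by
  obtain ⟨-, himg, hedge⟩ := hφ
  have hvert : ∀ x, x ∈ H.1 ↔ ∃ u, φ u = x := by simp [← himg]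
  refine Prod.ext ?_ ?_
  · ext x
    rw [hvert]
    simp only [expanderGraph, Fin.exists_fin_succ, Fin.succ_zero_eq_one, Fin.succ_one_eq_two,
      IsEmpty.exists_iff, or_false, mem_insert, mem_singleton]
    tauto
  · ext ⟨x, y⟩
    constructor
    · intro he
      obtain ⟨hx, hy, -⟩ := hH _ he
      obtain ⟨u, rfl⟩ := (hvert x).1 hx
      obtain ⟨v, rfl⟩ := (hvert y).1 hy
      have huv := (hedge u v).2 he
      simp only [hM, mem_insert, mem_singleton, Prod.ext_iff] at huv
      rcases huv with ⟨rfl, rfl⟩ | ⟨rfl, rfl⟩ <;> simp [expanderGraph]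
    · intro he
      simp only [expanderGraph, mem_insert, mem_singleton] at he
      rcases he with he | he <;> rw [he]
      · exact (hedge 1 0).1 (by simp [hM])
      · exact (hedge 1 2).1 (by simp [hM])

lemma isFuncInstance_and_anchoredPair_iff (hM : M.edges = {(1, 0), (1, 2)}) (hij : i ≠ j) :
    IsFuncInstance M G H ∧ AnchoredPair M {0, 2} H i j ↔
      ∃ k, ((k, i) ∈ edgeFinset G ∧ (k, j) ∈ edgeFinset G) ∧ H = expanderGraph k i j := by
  constructor
  · rintro ⟨⟨hH, hsub, -⟩, φ, hφ, a, ha, b, hb, hab, rfl, rfl⟩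
    have hshape : H = expanderGraph (φ 1) (φ a) (φ b) := by
      rw [hφ.eq_expanderGraph hM hH]
      simp only [mem_insert, mem_singleton] at ha hb
      rcases ha with rfl | rfl <;> rcases hb with rfl | rfl <;>
        first | exact absurd rfl hab | rfl | exact expanderGraph_comm _ _ _
    refine ⟨φ 1, ⟨hsub ?_, hsub ?_⟩, hshape⟩ <;> simp [hshape, expanderGraph]
  · rintro ⟨k, ⟨hki, hkj⟩, rfl⟩
    have hki' := (mem_edgeFinset.1 hki).1
    have hkj' := (mem_edgeFinset.1 hkj).1
    have hiso := isIso_expanderGraph hM hki' hkj' hij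
    refine ⟨⟨isGraphPair_expanderGraph hki' hkj', ?_, _, hiso⟩,
      _, hiso, 0, by simp, 2, by simp, by decide, rfl, rfl⟩
    simp [expanderGraph, insert_subset_iff, hki, hkj]

lemma edgeFinset_filter_expanderGraph {S D : Finset (Fin n)} (hdisj : Disjoint S D)
    (hbip : ∀ p ∈ edgeFinset G, p.1 ∈ S ∧ p.2 ∈ D)
    (hki : (k, i) ∈ edgeFinset G) (hkj : (k, j) ∈ edgeFinset G) :
    (edgeFinset G).filter (fun e => e.1 ∈ (expanderGraph k i j).1 ∧ e.2 ∈ (expanderGraph k i j).1) =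
      (expanderGraph k i j).2 := by
  have hkD : k ∉ D := disjoint_left.1 hdisj (hbip _ hki).1
  have hiS : i ∉ S := disjoint_right.1 hdisj (hbip _ hki).2
  have hjS : j ∉ S := disjoint_right.1 hdisj (hbip _ hkj).2
  ext ⟨x, y⟩
  simp only [expanderGraph, mem_filter, mem_insert, mem_singleton, Prod.ext_iff]
  constructor
  · rintro ⟨he, hx, hy⟩
    obtain ⟨hxS, hyD⟩ := hbip _ he
    rcases hx with rfl | rfl | rfl
    · rcases hy with rfl | rfl | rfl <;> tauto
    · exact absurd hxS hiS
    · exact absurd hxS hjS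
  · rintro (⟨rfl, rfl⟩ | ⟨rfl, rfl⟩)
    · exact ⟨hki, by simp⟩
    · exact ⟨hkj, by simp⟩

lemma isStrucInstance_and_anchoredPair_iff {S D : Finset (Fin n)} (hdisj : Disjoint S D)
    (hbip : ∀ p ∈ edgeFinset G, p.1 ∈ S ∧ p.2 ∈ D) (hM : M.edges = {(1, 0), (1, 2)})
    (hij : i ≠ j) :
    IsStrucInstance M G H ∧ AnchoredPair M {0, 2} H i j ↔
      ∃ k, ((k, i) ∈ edgeFinset G ∧ (k, j) ∈ edgeFinset G) ∧ H = expanderGraph k i j := by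
  rw [← isFuncInstance_and_anchoredPair_iff hM hij]
  constructor
  · rintro ⟨⟨hH, hind, hφ⟩, hanch⟩
    exact ⟨⟨hH, hind ▸ filter_subset _ _, hφ⟩, hanch⟩
  · intro hfunc
    obtain ⟨k, ⟨hki, hkj⟩, rfl⟩ := (isFuncInstance_and_anchoredPair_iff hM hij).1 hfunc
    obtain ⟨⟨hH, -, hφ⟩, hanch⟩ := hfunc
    exact ⟨⟨hH, (edgeFinset_filter_expanderGraph hdisj hbip hki hkj).symm, hφ⟩, hanch⟩

end ExpanderMotif

lemma sum_ite_exists_expanderGraph {G : Matrix (Fin n) (Fin n) ℝ} {S : Finset (Fin n)}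
    (hS : ∀ p ∈ edgeFinset G, p.1 ∈ S) {i j : Fin n} (hij : i ≠ j) :
    ∑ H : Finset (Fin n) × Finset (Fin n × Fin n),
        (if ∃ k, ((k, i) ∈ edgeFinset G ∧ (k, j) ∈ edgeFinset G) ∧ H = expanderGraph k i j
          then ∑ e ∈ H.2, G e.1 e.2 else 0) =
      ∑ k ∈ S.filter (fun k => (k, i) ∈ edgeFinset G ∧ (k, j) ∈ edgeFinset G),
        (G k i + G k j) := by
  have hinstances : univ.filter (fun H => ∃ k, ((k, i) ∈ edgeFinset G ∧ (k, j) ∈ edgeFinset G) ∧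
        H = expanderGraph k i j) =
      (S.filter (fun k => (k, i) ∈ edgeFinset G ∧ (k, j) ∈ edgeFinset G)).image
        (expanderGraph · i j) := by
    ext H
    simp only [mem_filter, mem_univ, true_and, mem_image]
    constructor
    · rintro ⟨k, hk, rfl⟩
      exact ⟨k, ⟨hS _ hk.1, hk⟩, rfl⟩
    · rintro ⟨k, ⟨-, hk⟩, rfl⟩
      exact ⟨k, hk, rfl⟩
  rw [← sum_filter, hinstances, sum_image (expanderGraph_injective i j).injOn]
  refine sum_congr rfl fun k _ => sum_pair ?_
  simpa using hij

theorem expander_mam_bipartite_general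
    (G : Matrix (Fin n) (Fin n) ℝ)
    (S D : Finset (Fin n)) (hdisj : Disjoint S D)
    (hbip : ∀ p ∈ edgeFinset G, p.1 ∈ S ∧ p.2 ∈ D)
    (Mexpa : Motif 3) (hM : Mexpa.edges = {((1 : Fin 3), 0), (1, 2)})
    (A : Finset (Fin 3)) (hA : A = {0, 2}) (i j : Fin n) :
    mamFunc Mexpa A G i j =
      (if i ≠ j then (1 : ℝ) else 0) *
        ∑ k ∈ S.filter (fun k => (k, i) ∈ edgeFinset G ∧ (k, j) ∈ edgeFinset G),
          (1 / 2) * (G k i + G k j) ∧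
    mamStruc Mexpa A G i j =
      (if i ≠ j then (1 : ℝ) else 0) *
        ∑ k ∈ S.filter (fun k => (k, i) ∈ edgeFinset G ∧ (k, j) ∈ edgeFinset G),
          (1 / 2) * (G k i + G k j) := by
  subst hA
  by_cases hij : i = j
  · subst hij
    have hnone : ∀ H, ¬ AnchoredPair Mexpa {0, 2} H i i := fun H h => h.ne rfl
    simp [mamFunc, mamStruc, hnone]
  have hcard : (Mexpa.edges.card : ℝ) = 2 := by rw [hM]; rfl
  simp only [mamFunc, mamStruc, isFuncInstance_and_anchoredPair_iff hM hij,
    isStrucInstance_and_anchoredPair_iff hdisj hbip hM hij,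
    sum_ite_exists_expanderGraph (fun p hp => (hbip p hp).1) hij, hcard, if_pos hij, one_mul,
    mul_sum, and_self]

/-- **Expanders in bipartite graphs.** -/
theorem expander_mam_bipartite
    (G : Matrix (Fin n) (Fin n) ℝ)
    (hpos : ∀ i j, 0 ≤ G i j) (hdiag : ∀ i, G i i = 0)
    (S D : Finset (Fin n)) (hdisj : Disjoint S D) (hcover : S ∪ D = Finset.univ)
    (hbip : ∀ p ∈ edgeFinset G, p.1 ∈ S ∧ p.2 ∈ D)
    (Mexpa : Motif 3) (hM : Mexpa.edges = {((1 : Fin 3), 0), (1, 2)})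
    (A : Finset (Fin 3)) (hA : A = {0, 2}) (i j : Fin n) :
    mamFunc Mexpa A G i j =
      (if i ≠ j then (1 : ℝ) else 0) *
        ∑ k ∈ S.filter (fun k => (k, i) ∈ edgeFinset G ∧ (k, j) ∈ edgeFinset G),
          (1 / 2) * (G k i + G k j) ∧
    mamStruc Mexpa A G i j =
      (if i ≠ j then (1 : ℝ) else 0) *
        ∑ k ∈ S.filter (fun k => (k, i) ∈ edgeFinset G ∧ (k, j) ∈ edgeFinset G),
          (1 / 2) * (G k i + G k j) :=
  expander_mam_bipartite_general G S D hdisj hbip Mexpa hM A hA i j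
end
end

section
/- Let G be a weighted directed bipartite graph with source vertices S and destination vertices D. Then every functional instance of the collider motif M_coll in G is a structural instance, and likewise for the expander motif M_expa; consequently the functional and structural motif adjacency matrices coincide: M^func_coll = M^struc_coll and M^func_expa = M^struc_expa. -/
open scoped Classical BigOperators Matrix

noncomputable section

variable {n m : ℕ}

/-!
In a bipartite graph every edge runs from `S` to `D`. For a functional instance of a motif,
a motif vertex sent into `S` therefore has no in-edges and one sent into `D` has no out-edges,
so any edge of `G` between two vertices of the instance joins (the images of) a source and a
sink of the motif. In the collider and in the expander every source is joined to every sink,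
so such an edge already belongs to the instance: the instance is induced. Equal instance sets
give equal motif adjacency matrices.
-/

namespace Motif

def IsSource (M : Motif m) (u : Fin m) : Prop := ∀ w, (w, u) ∉ M.edges

def IsSink (M : Motif m) (v : Fin m) : Prop := ∀ w, (v, w) ∉ M.edges

def JoinsSourcesToSinks (M : Motif m) : Prop :=
  ∀ u v, u ≠ v → M.IsSource u → M.IsSink v → (u, v) ∈ M.edges

theorem joinsSourcesToSinks_of_edges_eq_collider (M : Motif 3)
    (hM : M.edges = {((0 : Fin 3), 1), (2, 1)}) : M.JoinsSourcesToSinks := by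
  unfold JoinsSourcesToSinks IsSource IsSink
  rw [hM]
  decide

theorem joinsSourcesToSinks_of_edges_eq_expander (M : Motif 3)
    (hM : M.edges = {((1 : Fin 3), 0), (1, 2)}) : M.JoinsSourcesToSinks := by
  unfold JoinsSourcesToSinks IsSource IsSink
  rw [hM]
  decide

end Motif

section Instances

variable {M : Motif m} {G : Matrix (Fin n) (Fin n) ℝ}
  {H : Finset (Fin n) × Finset (Fin n × Fin n)}

theorem IsStrucInstance.isFuncInstance_s8 (hH : IsStrucInstance M G H) : IsFuncInstance M G H :=
  ⟨hH.1, hH.2.1 ▸ Finset.filter_subset _ _, hH.2.2⟩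

theorem IsFuncInstance.isStrucInstance_of_forall_mem
    (hH : IsFuncInstance M G H)
    (hind : ∀ e ∈ edgeFinset G, e.1 ∈ H.1 → e.2 ∈ H.1 → e ∈ H.2) :
    IsStrucInstance M G H := by
  obtain ⟨hpair, hsub, hiso⟩ := hH
  refine ⟨hpair, Finset.ext fun e => ?_, hiso⟩
  rw [Finset.mem_filter]
  exact ⟨fun he => ⟨hsub he, (hpair e he).1, (hpair e he).2.1⟩,
    fun ⟨he, h₁, h₂⟩ => hind e he h₁ h₂⟩

theorem mamFunc_eq_mamStruc (A : Finset (Fin m))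
    (hH : ∀ H, IsFuncInstance M G H → IsStrucInstance M G H) :
    mamFunc M A G = mamStruc M A G := by
  have hiff : ∀ H, IsFuncInstance M G H ↔ IsStrucInstance M G H :=
    fun H => ⟨hH H, IsStrucInstance.isFuncInstance_s8⟩
  ext i j
  simp only [mamFunc, mamStruc, hiff]

theorem IsFuncInstance.isStrucInstance_of_bipartite (hH : IsFuncInstance M G H)
    {S D : Finset (Fin n)} (hdisj : Disjoint S D)
    (hbip : ∀ p ∈ edgeFinset G, p.1 ∈ S ∧ p.2 ∈ D) (hM : M.JoinsSourcesToSinks) :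
    IsStrucInstance M G H := by
  refine hH.isStrucInstance_of_forall_mem fun ⟨x, y⟩ hxy hx hy => ?_
  obtain ⟨-, hsub, φ, -, himg, hedge⟩ := hH
  rw [← himg] at hx hy
  obtain ⟨u, -, rfl⟩ := Finset.mem_image.1 hx
  obtain ⟨v, -, rfl⟩ := Finset.mem_image.1 hy
  have hsource : M.IsSource u := fun w hw =>
    Finset.disjoint_left.1 hdisj (hbip _ hxy).1 (hbip _ (hsub ((hedge w u).1 hw))).2
  have hsink : M.IsSink v := fun w hw =>
    Finset.disjoint_left.1 hdisj (hbip _ (hsub ((hedge v w).1 hw))).1 (hbip _ hxy).2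
  have hne : u ≠ v := fun h => (Finset.mem_filter.1 hxy).2.1 (congrArg φ h)
  exact (hedge u v).1 (hM u v hne hsource hsink)

end Instances

theorem bipartite_func_eq_struc_general
    (G : Matrix (Fin n) (Fin n) ℝ)
    (S D : Finset (Fin n)) (hdisj : Disjoint S D)
    (hbip : ∀ p ∈ edgeFinset G, p.1 ∈ S ∧ p.2 ∈ D)
    (Mcoll : Motif 3) (hMc : Mcoll.edges = {((0 : Fin 3), 1), (2, 1)})
    (Mexpa : Motif 3) (hMe : Mexpa.edges = {((1 : Fin 3), 0), (1, 2)})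
    (A : Finset (Fin 3)) :
    (∀ H : Finset (Fin n) × Finset (Fin n × Fin n),
      IsFuncInstance Mcoll G H → IsStrucInstance Mcoll G H) ∧
    (∀ H : Finset (Fin n) × Finset (Fin n × Fin n),
      IsFuncInstance Mexpa G H → IsStrucInstance Mexpa G H) ∧
    mamFunc Mcoll A G = mamStruc Mcoll A G ∧
    mamFunc Mexpa A G = mamStruc Mexpa A G := by
  have hcoll : ∀ H, IsFuncInstance Mcoll G H → IsStrucInstance Mcoll G H := fun _ hH =>
    hH.isStrucInstance_of_bipartite hdisj hbip
      (Motif.joinsSourcesToSinks_of_edges_eq_collider Mcoll hMc)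
  have hexpa : ∀ H, IsFuncInstance Mexpa G H → IsStrucInstance Mexpa G H := fun _ hH =>
    hH.isStrucInstance_of_bipartite hdisj hbip
      (Motif.joinsSourcesToSinks_of_edges_eq_expander Mexpa hMe)
  exact ⟨hcoll, hexpa, mamFunc_eq_mamStruc A hcoll, mamFunc_eq_mamStruc A hexpa⟩

/-- **In bipartite graphs, all collider/expander instances are structural, and the
functional and structural MAMs coincide.** -/
theorem bipartite_func_eq_struc
    (G : Matrix (Fin n) (Fin n) ℝ)
    (hpos : ∀ i j, 0 ≤ G i j) (hdiag : ∀ i, G i i = 0)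
    (S D : Finset (Fin n)) (hdisj : Disjoint S D) (hcover : S ∪ D = Finset.univ)
    (hbip : ∀ p ∈ edgeFinset G, p.1 ∈ S ∧ p.2 ∈ D)
    (Mcoll : Motif 3) (hMc : Mcoll.edges = {((0 : Fin 3), 1), (2, 1)})
    (Mexpa : Motif 3) (hMe : Mexpa.edges = {((1 : Fin 3), 0), (1, 2)})
    (A : Finset (Fin 3)) (hA : A = {0, 2}) :
    (∀ H : Finset (Fin n) × Finset (Fin n × Fin n),
      IsFuncInstance Mcoll G H → IsStrucInstance Mcoll G H) ∧
    (∀ H : Finset (Fin n) × Finset (Fin n × Fin n),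
      IsFuncInstance Mexpa G H → IsStrucInstance Mexpa G H) ∧
    mamFunc Mcoll A G = mamStruc Mcoll A G ∧
    mamFunc Mexpa A G = mamStruc Mexpa A G :=
  bipartite_func_eq_struc_general G S D hdisj hbip Mcoll hMc Mexpa hMe A
end
end

section
/- Let G be a weighted directed graph on vertex set V = {1,…,n} and let M_1 be the simple cyclic-triangle motif with vertices {1,2,3} and edge set E_M = {(1,2),(2,3),(3,1)}. Then the structural motif adjacency matrix of M_1 in G satisfies M^struc = (1/3)·(C + Cᵀ), where C = J_sᵀ ∘ (J_s G_s) + J_sᵀ ∘ (G_s J_s) + G_sᵀ ∘ (J_s J_s). -/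
open scoped Classical BigOperators Matrix

noncomputable section

variable {n m : ℕ}

/-!
An induced copy of the directed triangle cannot contain a reciprocated edge, since the reverse
edge would be induced as well. So the structural instances with anchored pair `{i, j}` are
exactly the triangles `i → j → k → i` and `i → k → j → i` made of single edges, each determined
by its third vertex `k`. The three products in `C i j` pick out the triangles `i → k → j → i`,
one product for each position of the weighted edge, and after rotating the cycle `C j i` picks
out the triangles `i → j → k → i`.
-/

lemma exists_third_of_cyclic {α : Type*} {P : α → α → α → Prop}
    (hP : ∀ x y z, P x y z → P y z x) {ψ : Fin 3 → α} (h : P (ψ 0) (ψ 1) (ψ 2))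
    {u v : Fin 3} (huv : u ≠ v) : ∃ k, P (ψ u) (ψ v) k ∨ P (ψ u) k (ψ v) := by
  have h' := hP _ _ _ h
  have h'' := hP _ _ _ h'
  fin_cases u <;> fin_cases v <;>
    first
      | exact absurd rfl huv | exact ⟨_, .inl h⟩ | exact ⟨_, .inr h⟩ | exact ⟨_, .inl h'⟩
      | exact ⟨_, .inr h'⟩ | exact ⟨_, .inl h''⟩ | exact ⟨_, .inr h''⟩

def IsSingleEdge (G : Matrix (Fin n) (Fin n) ℝ) (a b : Fin n) : Prop :=
  (a, b) ∈ edgeFinset G ∧ (b, a) ∉ edgeFinset G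

def IsSingleTriangle (G : Matrix (Fin n) (Fin n) ℝ) (a b c : Fin n) : Prop :=
  IsSingleEdge G a b ∧ IsSingleEdge G b c ∧ IsSingleEdge G c a

def triangle (a b c : Fin n) : Finset (Fin n) × Finset (Fin n × Fin n) :=
  ({a, b, c}, {(a, b), (b, c), (c, a)})

def triangleWeight (G : Matrix (Fin n) (Fin n) ℝ) (a b c : Fin n) : ℝ :=
  if IsSingleTriangle G a b c then G a b + G b c + G c a else 0

section

variable {G : Matrix (Fin n) (Fin n) ℝ} {a b c : Fin n}

lemma IsSingleEdge.ne (h : IsSingleEdge G a b) : a ≠ b :=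
  (Finset.mem_filter.mp h.1).2.1

lemma IsSingleTriangle.rotate (h : IsSingleTriangle G a b c) : IsSingleTriangle G b c a :=
  ⟨h.2.1, h.2.2, h.1⟩

lemma IsSingleTriangle.ne (h : IsSingleTriangle G a b c) : a ≠ b ∧ b ≠ c ∧ c ≠ a :=
  ⟨h.1.ne, h.2.1.ne, h.2.2.ne⟩

lemma triangleWeight_rotate (G : Matrix (Fin n) (Fin n) ℝ) (a b c : Fin n) :
    triangleWeight G a b c = triangleWeight G b c a := by
  unfold triangleWeight
  by_cases h : IsSingleTriangle G a b c
  · rw [if_pos h, if_pos h.rotate]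
    ring
  · rw [if_neg h, if_neg fun h' => h h'.rotate.rotate]

lemma triangle_rotate (a b c : Fin n) : triangle a b c = triangle b c a := by
  ext <;> simp [triangle] <;> tauto

lemma triangle_eq_third {k k' : Fin n} (hka : k ≠ a) (hkb : k ≠ b)
    (h : triangle a b k = triangle a b k') : k = k' := by
  have hk : k ∈ (triangle a b k').1 := h ▸ by simp [triangle]
  simpa [triangle, hka, hkb] using hk

lemma sum_triangle (G : Matrix (Fin n) (Fin n) ℝ) (hab : a ≠ b) (hbc : b ≠ c) (hca : c ≠ a) :
    ∑ e ∈ (triangle a b c).2, G e.1 e.2 = G a b + G b c + G c a := by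
  simp [triangle, Finset.sum_insert, hab, hbc, hca.symm, add_assoc]

lemma triangleWeight_eq_ite (G : Matrix (Fin n) (Fin n) ℝ) (a b c : Fin n) :
    triangleWeight G a b c =
      if IsSingleTriangle G a b c then ∑ e ∈ (triangle a b c).2, G e.1 e.2 else 0 := by
  unfold triangleWeight
  split_ifs with h
  · obtain ⟨hab, hbc, hca⟩ := h.ne
    exact (sum_triangle G hab hbc hca).symm
  · rfl

end

section

variable {M : Motif 3} {G : Matrix (Fin n) (Fin n) ℝ} {H : Finset (Fin n) × Finset (Fin n × Fin n)}
  {φ : Fin 3 → Fin n} {a b c : Fin n}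

lemma isIso_triangle (hM : M.edges = {((0 : Fin 3), 1), (1, 2), (2, 0)})
    (hab : a ≠ b) (hbc : b ≠ c) (hca : c ≠ a) : IsIso M (triangle a b c) ![a, b, c] := by
  refine ⟨?_, ?_, ?_⟩
  · intro u v huv
    fin_cases u <;> fin_cases v <;> simp_all [eq_comm]
  · ext x
    simp [triangle, Fin.exists_fin_succ, eq_comm]
  · intro u v
    fin_cases u <;> fin_cases v <;> simp [hM, triangle, hab, hbc, hca, hab.symm, hbc.symm, hca.symm]

lemma isStrucInstance_triangle (hM : M.edges = {((0 : Fin 3), 1), (1, 2), (2, 0)})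
    (h : IsSingleTriangle G a b c) : IsStrucInstance M G (triangle a b c) := by
  obtain ⟨hab, hbc, hca⟩ := h.ne
  refine ⟨?_, ?_, _, isIso_triangle hM hab hbc hca⟩
  · intro e he
    simp only [triangle, Finset.mem_insert, Finset.mem_singleton] at he
    rcases he with rfl | rfl | rfl <;> simp [triangle, hab, hbc, hca]
  · ext ⟨x, y⟩
    simp only [triangle, Finset.mem_filter, Finset.mem_insert, Finset.mem_singleton,
      Prod.mk.injEq]
    constructor
    · rintro (⟨rfl, rfl⟩ | ⟨rfl, rfl⟩ | ⟨rfl, rfl⟩) <;> simp [h.1.1, h.2.1.1, h.2.2.1]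
    · rintro ⟨hxy, hx, hy⟩
      have hne : x ≠ y := (Finset.mem_filter.mp hxy).2.1
      rcases hx with rfl | rfl | rfl <;> rcases hy with rfl | rfl | rfl <;>
        first
          | exact absurd rfl hne | exact absurd hxy h.1.2 | exact absurd hxy h.2.1.2
          | exact absurd hxy h.2.2.2 | simp

lemma IsIso.eq_triangle (hM : M.edges = {((0 : Fin 3), 1), (1, 2), (2, 0)})
    (hH : IsGraphPair H) (hφ : IsIso M H φ) : H = triangle (φ 0) (φ 1) (φ 2) := by
  obtain ⟨-, himage, hedges⟩ := hφ
  have hverts : H.1 = {φ 0, φ 1, φ 2} := by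
    rw [← himage]
    ext x
    simp [Fin.exists_fin_succ, eq_comm]
  refine Prod.ext hverts ?_
  ext ⟨x, y⟩
  constructor
  · intro hxy
    obtain ⟨hx, hy, -⟩ := hH _ hxy
    rw [← himage] at hx hy
    obtain ⟨u, -, rfl⟩ := Finset.mem_image.mp hx
    obtain ⟨v, -, rfl⟩ := Finset.mem_image.mp hy
    have huv := (hedges u v).2 hxy
    rw [hM] at huv
    fin_cases u <;> fin_cases v <;> simp_all [triangle]
  · simp only [triangle, Finset.mem_insert, Finset.mem_singleton, Prod.mk.injEq]
    rintro (⟨rfl, rfl⟩ | ⟨rfl, rfl⟩ | ⟨rfl, rfl⟩) <;> exact (hedges _ _).1 (by rw [hM]; decide)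

lemma isSingleEdge_of_induced {x y : Fin n}
    (hH : H.2 = (edgeFinset G).filter fun e => e.1 ∈ H.1 ∧ e.2 ∈ H.1)
    (hxy : (x, y) ∈ H.2) (hyx : (y, x) ∉ H.2) : IsSingleEdge G x y := by
  rw [hH, Finset.mem_filter] at hxy hyx
  exact ⟨hxy.1, fun h => hyx ⟨h, hxy.2.2, hxy.2.1⟩⟩

lemma IsStrucInstance.isSingleTriangle (hM : M.edges = {((0 : Fin 3), 1), (1, 2), (2, 0)})
    (hH : IsStrucInstance M G H) (hφ : IsIso M H φ) :
    IsSingleTriangle G (φ 0) (φ 1) (φ 2) := by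
  have hedge : ∀ u v : Fin 3, (u, v) ∈ M.edges → (v, u) ∉ M.edges → IsSingleEdge G (φ u) (φ v) :=
    fun u v huv hvu => isSingleEdge_of_induced hH.2.1 ((hφ.2.2 u v).1 huv)
      fun h => hvu ((hφ.2.2 v u).2 h)
  refine ⟨hedge 0 1 ?_ ?_, hedge 1 2 ?_ ?_, hedge 2 0 ?_ ?_⟩ <;> rw [hM] <;> decide

lemma isStrucInstance_and_anchoredPair_iff_s11 (hM : M.edges = {((0 : Fin 3), 1), (1, 2), (2, 0)})
    (i j : Fin n) :
    IsStrucInstance M G H ∧ AnchoredPair M Finset.univ H i j ↔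
      ∃ k, (IsSingleTriangle G i j k ∧ H = triangle i j k) ∨
        (IsSingleTriangle G i k j ∧ H = triangle i k j) := by
  constructor
  · rintro ⟨hH, φ, hφ, u, -, v, -, huv, rfl, rfl⟩
    refine exists_third_of_cyclic (P := fun x y z => IsSingleTriangle G x y z ∧ H = triangle x y z)
      (fun x y z h => ⟨h.1.rotate, h.2.trans (triangle_rotate x y z)⟩)
      ⟨hH.isSingleTriangle hM hφ, hφ.eq_triangle hM hH.1⟩ huv
  · rintro ⟨k, ⟨h, rfl⟩ | ⟨h, rfl⟩⟩ <;> obtain ⟨h₁, h₂, h₃⟩ := h.ne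
    · exact ⟨isStrucInstance_triangle hM h, _, isIso_triangle hM h₁ h₂ h₃,
        0, Finset.mem_univ _, 1, Finset.mem_univ _, by decide, rfl, rfl⟩
    · exact ⟨isStrucInstance_triangle hM h, _, isIso_triangle hM h₁ h₂ h₃,
        0, Finset.mem_univ _, 2, Finset.mem_univ _, by decide, rfl, rfl⟩

end

lemma sum_strucInstances_triangle {M : Motif 3} (hM : M.edges = {((0 : Fin 3), 1), (1, 2), (2, 0)})
    (G : Matrix (Fin n) (Fin n) ℝ) (i j : Fin n) :
    (∑ H : Finset (Fin n) × Finset (Fin n × Fin n),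
      if IsStrucInstance M G H ∧ AnchoredPair M Finset.univ H i j then ∑ e ∈ H.2, G e.1 e.2
      else 0) = ∑ k, (triangleWeight G i j k + triangleWeight G i k j) := by
  have hinstances :
      Finset.univ.filter (fun H => IsStrucInstance M G H ∧ AnchoredPair M Finset.univ H i j) =
        (Finset.univ.filter (IsSingleTriangle G i j ·)).image (triangle i j ·) ∪
          (Finset.univ.filter (IsSingleTriangle G i · j)).image (triangle i · j) := by
    ext H
    simp [isStrucInstance_and_anchoredPair_iff_s11 hM, eq_comm, exists_or]
  have hdisj : Disjoint ((Finset.univ.filter (IsSingleTriangle G i j ·)).image (triangle i j ·))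
      ((Finset.univ.filter (IsSingleTriangle G i · j)).image (triangle i · j)) := by
    simp only [Finset.disjoint_left, Finset.mem_image, Finset.mem_filter]
    rintro _ ⟨k, ⟨-, hk⟩, rfl⟩ ⟨k', ⟨-, hk'⟩, -⟩
    exact hk'.2.2.2 hk.1.1
  rw [← Finset.sum_filter, hinstances, Finset.sum_union hdisj, Finset.sum_image, Finset.sum_image,
    Finset.sum_filter, Finset.sum_filter, ← Finset.sum_add_distrib]
  · simp only [triangleWeight_eq_ite]
  · intro k hk k' _ (h : triangle i k j = triangle i k' j)
    obtain ⟨hik, hkj, -⟩ := (Finset.mem_filter.mp hk).2.ne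
    rw [← triangle_rotate j i k, ← triangle_rotate j i k'] at h
    exact triangle_eq_third hkj hik.symm h
  · intro k hk k' _ (h : triangle i j k = triangle i j k')
    obtain ⟨-, hjk, hki⟩ := (Finset.mem_filter.mp hk).2.ne
    exact triangle_eq_third hki hjk.symm h

lemma singleProducts_eq_triangleWeight (G : Matrix (Fin n) (Fin n) ℝ) (a b c : Fin n) :
    Jsmat G c a * (Jsmat G a b * Gsmat G b c) + Jsmat G c a * (Gsmat G a b * Jsmat G b c) +
      Gsmat G c a * (Jsmat G a b * Jsmat G b c) = triangleWeight G a b c := by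
  unfold Jsmat Gsmat triangleWeight IsSingleTriangle IsSingleEdge
  split_ifs <;> simp_all [add_comm]

lemma singleProducts_apply (G : Matrix (Fin n) (Fin n) ℝ) (i j : Fin n) :
    (had (Jsmat G)ᵀ (Jsmat G * Gsmat G) + had (Jsmat G)ᵀ (Gsmat G * Jsmat G) +
      had (Gsmat G)ᵀ (Jsmat G * Jsmat G)) i j = ∑ k, triangleWeight G i k j := by
  simp only [Matrix.add_apply, had, Matrix.transpose_apply, Matrix.mul_apply, Finset.mul_sum,
    ← Finset.sum_add_distrib, singleProducts_eq_triangleWeight]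

theorem mam_M1_struc_general
    (G : Matrix (Fin n) (Fin n) ℝ)
    (M1 : Motif 3) (hM : M1.edges = {((0 : Fin 3), 1), (1, 2), (2, 0)}) :
    mamStruc M1 Finset.univ G =
      (1 / 3 : ℝ) •
        (had (Jsmat G)ᵀ (Jsmat G * Gsmat G) + had (Jsmat G)ᵀ (Gsmat G * Jsmat G) +
          had (Gsmat G)ᵀ (Jsmat G * Jsmat G) +
          (had (Jsmat G)ᵀ (Jsmat G * Gsmat G) + had (Jsmat G)ᵀ (Gsmat G * Jsmat G) +
            had (Gsmat G)ᵀ (Jsmat G * Jsmat G))ᵀ) := by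
  ext i j
  have hcard : M1.edges.card = 3 := by rw [hM]; decide
  rw [mamStruc, sum_strucInstances_triangle hM, hcard, Matrix.smul_apply, Matrix.add_apply,
    Matrix.transpose_apply, singleProducts_apply, singleProducts_apply, Finset.sum_add_distrib]
  simp only [← triangleWeight_rotate G i j]
  push_cast
  ring

/-- **Structural MAM formula for the cyclic triangle motif `M₁`.** -/
theorem mam_M1_struc
    (G : Matrix (Fin n) (Fin n) ℝ)
    (hpos : ∀ i j, 0 ≤ G i j) (hdiag : ∀ i, G i i = 0)
    (M1 : Motif 3) (hM : M1.edges = {((0 : Fin 3), 1), (1, 2), (2, 0)}) :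
    mamStruc M1 Finset.univ G =
      (1 / 3 : ℝ) •
        (had (Jsmat G)ᵀ (Jsmat G * Gsmat G) + had (Jsmat G)ᵀ (Gsmat G * Jsmat G) +
          had (Gsmat G)ᵀ (Jsmat G * Jsmat G) +
          (had (Jsmat G)ᵀ (Jsmat G * Gsmat G) + had (Jsmat G)ᵀ (Gsmat G * Jsmat G) +
            had (Gsmat G)ᵀ (Jsmat G * Jsmat G))ᵀ) :=
  mam_M1_struc_general G M1 hM
end
end

section
/- Let G be a weighted directed graph on vertex set V = {1,…,n} and let M_10 be the simple in-star motif with vertices {1,2,3} and edge set E_M = {(1,3),(2,3)}. Then the functional motif adjacency matrix of M_10 in G satisfies M^func = (1/2)·(C + Cᵀ + C'), where C = J ∘ (J_n G) + G ∘ (J_n J) and C' = J_n ∘ (J Gᵀ) + J_n ∘ (G Jᵀ). -/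
open scoped Classical BigOperators Matrix

noncomputable section

variable {n m : ℕ}

/-!
A functional instance of the in-star `M₁₀` is `x → z ← y` with `x ≠ y`, and it arises from
exactly two ordered triples, `(x, y, z)` and `(y, x, z)`; summing over triples instead of
instances doubles the sum. For a triple anchored at `{i, j}` there are six ways to place `i ≠ j`
among `x, y, z`, and the leaf symmetry pairs them into three roles: `i` leaf and `j` centre,
`j` leaf and `i` centre, or `i, j` both leaves. Since `G` vanishes off the edge set, the weight
`[x → z ← y] (G x z + G y z)` of a triple equals `J x z G y z + G x z J y z` (times `[x ≠ y]`),
so summing each role over the remaining vertex gives the entries of `C`, `Cᵀ` and `C'`.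
-/

section MotifInstances

variable {M : Motif m} {G : Matrix (Fin n) (Fin n) ℝ}
  {H : Finset (Fin n) × Finset (Fin n × Fin n)} {φ : Fin m → Fin n}

theorem anchoredPair_univ_iff {i j : Fin n} :
    AnchoredPair M Finset.univ H i j ↔ (∃ φ, IsIso M H φ) ∧ i ∈ H.1 ∧ j ∈ H.1 ∧ i ≠ j := by
  constructor
  · rintro ⟨φ, hφ, a, -, b, -, hab, rfl, rfl⟩
    exact ⟨⟨φ, hφ⟩, hφ.2.1 ▸ Finset.mem_image_of_mem φ (Finset.mem_univ a),
      hφ.2.1 ▸ Finset.mem_image_of_mem φ (Finset.mem_univ b), hφ.1.ne hab⟩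
  · rintro ⟨⟨φ, hφ⟩, hi, hj, hij⟩
    rw [← hφ.2.1] at hi hj
    obtain ⟨a, -, rfl⟩ := Finset.mem_image.1 hi
    obtain ⟨b, -, rfl⟩ := Finset.mem_image.1 hj
    exact ⟨φ, hφ, a, Finset.mem_univ a, b, Finset.mem_univ b, fun h => hij (h ▸ rfl), rfl, rfl⟩

def Motif.image (M : Motif m) (φ : Fin m → Fin n) :
    Finset (Fin n) × Finset (Fin n × Fin n) :=
  (Finset.univ.image φ, M.edges.image (Prod.map φ φ))

theorem IsIso.eq_image (hH : IsGraphPair H) (hφ : IsIso M H φ) : H = M.image φ := by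
  obtain ⟨-, hV, hE⟩ := hφ
  refine Prod.ext hV.symm (Finset.ext fun e => ?_)
  constructor
  · intro he
    obtain ⟨h1, h2, -⟩ := hH e he
    rw [← hV] at h1 h2
    obtain ⟨u, -, hu⟩ := Finset.mem_image.1 h1
    obtain ⟨v, -, hv⟩ := Finset.mem_image.1 h2
    exact Finset.mem_image.2 ⟨(u, v), (hE u v).2 (by rwa [hu, hv]), Prod.ext hu hv⟩
  · rintro he
    obtain ⟨⟨u, v⟩, huv, rfl⟩ := Finset.mem_image.1 he
    exact (hE u v).1 huv

theorem isGraphPair_image (hφ : Function.Injective φ) : IsGraphPair (M.image φ) := by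
  intro e he
  obtain ⟨⟨u, v⟩, huv, rfl⟩ := Finset.mem_image.1 he
  exact ⟨Finset.mem_image_of_mem φ (Finset.mem_univ u), Finset.mem_image_of_mem φ
    (Finset.mem_univ v), hφ.ne (M.irrefl _ huv)⟩

theorem isIso_image (hφ : Function.Injective φ) : IsIso M (M.image φ) φ :=
  ⟨hφ, rfl, fun _ _ => ((hφ.prodMap hφ).mem_finset_image).symm⟩

theorem isFuncInstance_iff :
    IsFuncInstance M G H ↔
      ∃ φ, Function.Injective φ ∧ (M.image φ).2 ⊆ edgeFinset G ∧ H = M.image φ := by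
  constructor
  · rintro ⟨hH, hE, φ, hφ⟩
    obtain rfl := hφ.eq_image hH
    exact ⟨φ, hφ.1, hE, rfl⟩
  · rintro ⟨φ, hφ, hE, rfl⟩
    exact ⟨isGraphPair_image hφ, hE, φ, isIso_image hφ⟩

end MotifInstances

section InStar

variable {G : Matrix (Fin n) (Fin n) ℝ}

theorem ne_of_mem_edgeFinset_s15 {a b : Fin n} (h : (a, b) ∈ edgeFinset G) : a ≠ b :=
  (Finset.mem_filter.1 h).2.1

theorem eq_zero_of_notMem_edgeFinset (hpos : ∀ i j, 0 ≤ G i j) (hdiag : ∀ i, G i i = 0)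
    {a b : Fin n} (h : (a, b) ∉ edgeFinset G) : G a b = 0 := by
  obtain rfl | hab := eq_or_ne a b
  · exact hdiag a
  · exact le_antisymm (not_lt.1 fun hlt => h (by simp [edgeFinset, hab, hlt])) (hpos a b)

def inStar (x y z : Fin n) : Finset (Fin n) × Finset (Fin n × Fin n) :=
  ({x, y, z}, {(x, z), (y, z)})

def IsInStar (G : Matrix (Fin n) (Fin n) ℝ) (x y z : Fin n) : Prop :=
  x ≠ y ∧ (x, z) ∈ edgeFinset G ∧ (y, z) ∈ edgeFinset G

theorem Motif.image_eq_inStar {M : Motif 3} (hM : M.edges = {(0, 2), (1, 2)})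
    (φ : Fin 3 → Fin n) : M.image φ = inStar (φ 0) (φ 1) (φ 2) := by
  simp [Motif.image, inStar, hM, Fin.univ_succ]

theorem isFuncInstance_iff_inStar {M : Motif 3} (hM : M.edges = {(0, 2), (1, 2)})
    {H : Finset (Fin n) × Finset (Fin n × Fin n)} :
    IsFuncInstance M G H ↔ ∃ x y z, IsInStar G x y z ∧ H = inStar x y z := by
  simp only [isFuncInstance_iff, Motif.image_eq_inStar hM]
  constructor
  · rintro ⟨φ, hφ, hE, rfl⟩
    exact ⟨φ 0, φ 1, φ 2, ⟨hφ.ne (by decide), hE (by simp [inStar]), hE (by simp [inStar])⟩, rfl⟩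
  · rintro ⟨x, y, z, ⟨hxy, hxz, hyz⟩, rfl⟩
    refine ⟨![x, y, z], ?_, ?_, rfl⟩
    · have := ne_of_mem_edgeFinset_s15 hxz
      have := ne_of_mem_edgeFinset_s15 hyz
      intro a b
      fin_cases a <;> fin_cases b <;> simp_all [eq_comm]
    · intro e he
      simp only [inStar, Finset.mem_insert, Finset.mem_singleton] at he
      rcases he with rfl | rfl <;> assumption

theorem inStar_eq_inStar_iff {x y z x' y' z' : Fin n} (h : x' ≠ y') :
    inStar x' y' z' = inStar x y z ↔ (x', y', z') = (x, y, z) ∨ (x', y', z') = (y, x, z) := by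
  constructor
  · intro hH
    have hE := congrArg Prod.snd hH
    have h1 : (x', z') ∈ (inStar x y z).2 := hE ▸ by simp [inStar]
    have h2 : (y', z') ∈ (inStar x y z).2 := hE ▸ by simp [inStar]
    simp only [inStar, Finset.mem_insert, Finset.mem_singleton, Prod.mk.injEq] at h1 h2 ⊢
    grind
  · rintro (h | h) <;> simp only [Prod.mk.injEq] at h <;> obtain ⟨rfl, rfl, rfl⟩ := h
    · rfl
    · exact Prod.ext (Finset.insert_comm _ _ _) (Finset.pair_comm _ _)

def IsAnchoredInStar (G : Matrix (Fin n) (Fin n) ℝ) (i j x y z : Fin n) : Prop :=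
  IsInStar G x y z ∧ i ∈ (inStar x y z).1 ∧ j ∈ (inStar x y z).1 ∧ i ≠ j

theorem isFuncInstance_and_anchoredPair_iff_s15 {M : Motif 3} (hM : M.edges = {(0, 2), (1, 2)})
    {H : Finset (Fin n) × Finset (Fin n × Fin n)} {i j : Fin n} :
    IsFuncInstance M G H ∧ AnchoredPair M Finset.univ H i j ↔
      ∃ x y z, IsAnchoredInStar G i j x y z ∧ H = inStar x y z := by
  rw [anchoredPair_univ_iff, isFuncInstance_iff_inStar hM]
  constructor
  · rintro ⟨⟨x, y, z, hxyz, rfl⟩, -, hij⟩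
    exact ⟨x, y, z, ⟨hxyz, hij⟩, rfl⟩
  · rintro ⟨x, y, z, ⟨hxyz, hij⟩, rfl⟩
    have hinst : IsFuncInstance M G (inStar x y z) :=
      (isFuncInstance_iff_inStar hM).2 ⟨x, y, z, hxyz, rfl⟩
    exact ⟨⟨x, y, z, hxyz, rfl⟩, hinst.2.2, hij⟩

theorem sum_edges_inStar {x y z : Fin n} (h : x ≠ y) :
    ∑ e ∈ (inStar x y z).2, G e.1 e.2 = G x z + G y z :=
  Finset.sum_pair fun he => h (congrArg Prod.fst he)

theorem isAnchoredInStar_swap {i j x y z : Fin n} :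
    IsAnchoredInStar G i j y x z ↔ IsAnchoredInStar G i j x y z := by
  simp only [IsAnchoredInStar, IsInStar, inStar, Finset.mem_insert, Finset.mem_singleton]
  grind

theorem sum_funcInstance_anchoredPair_eq {M : Motif 3} (hM : M.edges = {(0, 2), (1, 2)})
    (i j : Fin n) :
    (∑ H : Finset (Fin n) × Finset (Fin n × Fin n),
      if IsFuncInstance M G H ∧ AnchoredPair M Finset.univ H i j
        then ∑ e ∈ H.2, G e.1 e.2 else 0) =
    (1 / 2 : ℝ) * ∑ x, ∑ y, ∑ z, if IsAnchoredInStar G i j x y z then G x z + G y z else 0 := by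
  set T := Finset.univ.filter fun t : Fin n × Fin n × Fin n =>
    IsAnchoredInStar G i j t.1 t.2.1 t.2.2
  set f := fun t : Fin n × Fin n × Fin n => inStar t.1 t.2.1 t.2.2
  have hinstances : Finset.univ.filter
      (fun H => IsFuncInstance M G H ∧ AnchoredPair M Finset.univ H i j) = T.image f := by
    ext H
    simp [isFuncInstance_and_anchoredPair_iff_s15 hM, T, f, eq_comm]
  have hfiber : ∀ t ∈ T, T.filter (fun s => f s = f t) = {t, (t.2.1, t.1, t.2.2)} := by
    rintro ⟨x, y, z⟩ ht
    ext ⟨x', y', z'⟩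
    simp only [T, f, Finset.mem_filter, Finset.mem_univ, true_and, Finset.mem_insert,
      Finset.mem_singleton] at ht ⊢
    constructor
    · rintro ⟨ht', hf⟩
      exact (inStar_eq_inStar_iff ht'.1.1).1 hf
    · rintro (h | h) <;> simp only [Prod.mk.injEq] at h <;> obtain ⟨rfl, rfl, rfl⟩ := h
      · exact ⟨ht, rfl⟩
      · exact ⟨isAnchoredInStar_swap.2 ht, (inStar_eq_inStar_iff ht.1.1.symm).2 (Or.inr rfl)⟩
  rw [← Finset.sum_filter, hinstances,
    Finset.sum_image' (fun t => (1 / 2 : ℝ) * ∑ e ∈ (f t).2, G e.1 e.2)]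
  · rw [← Finset.mul_sum, Finset.sum_filter]
    simp only [Fintype.sum_prod_type]
    congr! 6 with x - y - z - h
    exact sum_edges_inStar h.1.1
  · intro t ht
    have hswap : f (t.2.1, t.1, t.2.2) = f t :=
      (inStar_eq_inStar_iff (Finset.mem_filter.1 ht).2.1.1.symm).2 (Or.inr rfl)
    rw [hfiber t ht, Finset.sum_pair, hswap]
    · ring
    · exact fun h => (Finset.mem_filter.1 ht).2.1.1 (congrArg Prod.fst h)

def inStarWeight (G : Matrix (Fin n) (Fin n) ℝ) (x y z : Fin n) : ℝ :=
  if IsInStar G x y z then G x z + G y z else 0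

theorem inStarWeight_swap (x y z : Fin n) : inStarWeight G y x z = inStarWeight G x y z := by
  simp only [inStarWeight, IsInStar]
  split_ifs <;> grind

theorem ite_isAnchoredInStar (i j x y z : Fin n) :
    (if IsAnchoredInStar G i j x y z then G x z + G y z else 0) =
      (if x = i ∧ z = j then inStarWeight G x y z else 0) +
      (if y = i ∧ z = j then inStarWeight G x y z else 0) +
      (if x = j ∧ z = i then inStarWeight G x y z else 0) +
      (if y = j ∧ z = i then inStarWeight G x y z else 0) +
      (if x = i ∧ y = j then inStarWeight G x y z else 0) +
      (if x = j ∧ y = i then inStarWeight G x y z else 0) := by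
  by_cases h : IsInStar G x y z
  · have hxy := h.1
    have hxz := ne_of_mem_edgeFinset_s15 h.2.1
    have hyz := ne_of_mem_edgeFinset_s15 h.2.2
    simp only [IsAnchoredInStar, inStarWeight, h, inStar, Finset.mem_insert, Finset.mem_singleton,
      true_and, if_true]
    split_ifs <;> grind
  · simp [IsAnchoredInStar, inStarWeight, h]

theorem sum_ite_isAnchoredInStar (i j : Fin n) :
    (∑ x, ∑ y, ∑ z, if IsAnchoredInStar G i j x y z then G x z + G y z else 0) =
      2 * ((∑ k, inStarWeight G i k j) + (∑ k, inStarWeight G j k i) +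
        ∑ k, inStarWeight G i j k) := by
  simp only [ite_isAnchoredInStar, Finset.sum_add_distrib]
  simp only [ite_and, Finset.sum_ite_eq', Finset.sum_ite_irrel, Finset.mem_univ, if_true,
    Finset.sum_const_zero]
  rw [Finset.sum_congr rfl fun k _ => inStarWeight_swap (G := G) i k j,
    Finset.sum_congr rfl fun k _ => inStarWeight_swap (G := G) j k i,
    Finset.sum_congr rfl fun k _ => inStarWeight_swap (G := G) i j k]
  ring

theorem inStarWeight_eq (hpos : ∀ i j, 0 ≤ G i j) (hdiag : ∀ i, G i i = 0) (x y z : Fin n) :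
    inStarWeight G x y z =
      Jmat G x z * (Jnmat n x y * G y z) + G x z * (Jnmat n x y * Jmat G y z) := by
  by_cases hxz : (x, z) ∈ edgeFinset G
  · by_cases hyz : (y, z) ∈ edgeFinset G
    · by_cases hxy : x = y <;> simp [inStarWeight, IsInStar, Jmat, Jnmat, hxz, hyz, hxy, add_comm]
    · simp [inStarWeight, IsInStar, Jmat, hyz, eq_zero_of_notMem_edgeFinset hpos hdiag hyz]
  · simp [inStarWeight, IsInStar, Jmat, hxz, eq_zero_of_notMem_edgeFinset hpos hdiag hxz]

end InStar

/-- **Functional MAM formula for the in-star motif `M₁₀`.** -/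
theorem mam_M10_func
    (G : Matrix (Fin n) (Fin n) ℝ)
    (hpos : ∀ i j, 0 ≤ G i j) (hdiag : ∀ i, G i i = 0)
    (M10 : Motif 3) (hM : M10.edges = {((0 : Fin 3), 2), (1, 2)}) :
    mamFunc M10 Finset.univ G =
      (1 / 2 : ℝ) •
        (had (Jmat G) (Jnmat n * G) + had G (Jnmat n * Jmat G) +
          (had (Jmat G) (Jnmat n * G) + had G (Jnmat n * Jmat G))ᵀ +
          (had (Jnmat n) (Jmat G * Gᵀ) + had (Jnmat n) (G * (Jmat G)ᵀ))) := by
  have hcard : M10.edges.card = 2 := by rw [hM]; decide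
  ext i j
  simp only [mamFunc, hcard, sum_funcInstance_anchoredPair_eq hM, sum_ite_isAnchoredInStar,
    Matrix.smul_apply, Matrix.add_apply, Matrix.transpose_apply, had, Matrix.mul_apply,
    Finset.mul_sum, ← Finset.sum_add_distrib, smul_eq_mul]
  refine Finset.sum_congr rfl fun k _ => ?_
  simp only [inStarWeight_eq hpos hdiag]
  ring
end
end
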